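/- arXiv:1609.00856 — 5 statements merged into one kernel-verified Lean document; each statement's English description precedes it below -/
import Mathlib

section
/- The function f_X(x) = (1/π)√(1/x − 1/4) on (0,4] is a probability density function, i.e., it is nonnegative on (0,4] and its integral over (0,4] equals 1. -/
open Real MeasureTheory

/-- Quarter circle law eigenvalue density. -/
noncomputable def fX (x : ℝ) : ℝ :=
  if 0 < x ∧ x ≤ 4 then (1 / π) * Real.sqrt (1 / x - 1 / 4) else 0

open Set

/-!
The substitution `x = a s²` turns `√(1/x - 1/a) dx` on `(0, a]` into `2 √a √(1 - s²) ds` on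
`(0, 1]`, and `∫₀¹ √(1 - s²) ds = π / 4` is the area of a quarter of the unit disc.
-/

theorem integral_sqrt_one_sub_sq_zero_one : ∫ s in (0 : ℝ)..1, √(1 - s ^ 2) = π / 4 := by
  have hint : ∀ a b : ℝ, IntervalIntegrable (fun s : ℝ => √(1 - s ^ 2)) volume a b := fun a b =>
    (by fun_prop : Continuous fun s : ℝ => √(1 - s ^ 2)).intervalIntegrable a b
  have hsymm : ∫ s in (-1 : ℝ)..0, √(1 - s ^ 2) = ∫ s in (0 : ℝ)..1, √(1 - s ^ 2) := by
    have := intervalIntegral.integral_comp_neg (a := 0) (b := 1) (fun s : ℝ => √(1 - s ^ 2))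
    simp only [neg_sq, neg_zero] at this
    exact this.symm
  have hwhole := integral_sqrt_one_sub_sq
  rw [← intervalIntegral.integral_add_adjacent_intervals (hint (-1) 0) (hint 0 1), hsymm] at hwhole
  linarith

theorem mul_sqrt_inv_sq_sub_inv {a s : ℝ} (ha : 0 < a) (hs : 0 < s) :
    2 * a * s * √(1 / (a * s ^ 2) - 1 / a) = 2 * √a * √(1 - s ^ 2) := by
  have hsqrt : √(a * s ^ 2) = √a * s := by rw [sqrt_mul ha.le, sqrt_sq hs.le]
  have hsa : √a ^ 2 = a := sq_sqrt ha.le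
  have hfrac : 1 / (a * s ^ 2) - 1 / a = (1 - s ^ 2) / (a * s ^ 2) := by field_simp
  rw [hfrac, sqrt_div' _ (by positivity), hsqrt]
  field_simp
  rw [hsa]
  ring

theorem integral_Ioc_sqrt_inv_sub_inv {a : ℝ} (ha : 0 < a) :
    ∫ x in Ioc 0 a, √(1 / x - 1 / a) = π * √a / 2 := by
  have hsubst := integral_Icc_deriv_smul_of_deriv_nonneg (a := 0) (b := 1)
    (f := fun s => a * s ^ 2) (f' := fun s => 2 * a * s) (g := fun x => √(1 / x - 1 / a))
    (by fun_prop) (fun s _ => ((hasDerivAt_pow 2 s).const_mul a).congr_deriv (by ring))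
    (fun s hs => by have := hs.1; positivity) zero_le_one
  simp only [zero_pow two_ne_zero, mul_zero, one_pow, mul_one, smul_eq_mul] at hsubst
  calc ∫ x in Ioc 0 a, √(1 / x - 1 / a)
      = ∫ s in Ioc 0 1, 2 * a * s * √(1 / (a * s ^ 2) - 1 / a) := by
        rw [← integral_Icc_eq_integral_Ioc, ← hsubst, integral_Icc_eq_integral_Ioc]
    _ = ∫ s in Ioc 0 1, 2 * √a * √(1 - s ^ 2) :=
        setIntegral_congr_fun measurableSet_Ioc fun s hs => mul_sqrt_inv_sq_sub_inv ha hs.1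
    _ = π * √a / 2 := by
        rw [integral_const_mul, ← intervalIntegral.integral_of_le zero_le_one,
          integral_sqrt_one_sub_sq_zero_one]
        ring

theorem quarter_circle_density_is_pdf :
    (∀ x ∈ Set.Ioc (0 : ℝ) 4, 0 ≤ fX x) ∧
    ∫ x in Set.Ioc (0 : ℝ) 4, fX x = 1 := by
  have hfX : EqOn fX (fun x => 1 / π * √(1 / x - 1 / 4)) (Ioc 0 4) := fun x hx => if_pos hx
  refine ⟨fun x hx => hfX hx ▸ by positivity, ?_⟩
  have hsqrt4 : √(4 : ℝ) = 2 := by rw [show (4 : ℝ) = 2 ^ 2 by norm_num, sqrt_sq zero_le_two]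
  rw [setIntegral_congr_fun measurableSet_Ioc hfX, integral_const_mul,
    integral_Ioc_sqrt_inv_sub_inv four_pos, hsqrt4]
  field_simp
end

section
/- For x ∈ (0,4], the cumulative distribution function of the quarter-circle-law eigenvalue density satisfies F_X(x) = (1/(2π))·( π + x√(4/x − 1) − 2·arctan( ((x−2)/(x−4))·√(4/x − 1) ) ), i.e., the derivative of the right-hand side equals (1/π)√(1/x − 1/4) on (0,4) and its limit as x → 0⁺ is 0. -/
open Real MeasureTheory

/-- Closed form of the quarter circle law CDF. -/
noncomputable def FXclosed (x : ℝ) : ℝ :=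
  (1 / (2 * π)) * (π + x * Real.sqrt (4 / x - 1) -
    2 * Real.arctan (((x - 2) / (x - 4)) * Real.sqrt (4 / x - 1)))

/-!
On `(0, 4)`, with `s = √(x (4 - x))`, one has `x √(4/x - 1) = s` and the arctangent argument
equals `(1 - x/2) / √(1 - (1 - x/2)²)`, so `FXclosed` agrees with
`(π + s - 2 arcsin (1 - x/2)) / (2π)`. This expression is continuous on all of `ℝ` and vanishes
at `0`, which gives the limit, and its derivative `(4 - x) / (2π s) = s / (2π x)` is the density.
-/

open Filter Set

noncomputable def quarterCircleCDF (x : ℝ) : ℝ :=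
  (1 / (2 * π)) * (π + √(x * (4 - x)) - 2 * arcsin (1 - x / 2))

lemma sqrt_one_div_sub_quarter {x : ℝ} (hx : 0 < x) :
    √(1 / x - 1 / 4) = √(x * (4 - x)) / (2 * x) := by
  rw [show 1 / x - 1 / 4 = x * (4 - x) / (2 * x) ^ 2 by field_simp; ring,
    sqrt_div' _ (by positivity), sqrt_sq (by positivity)]

lemma sqrt_four_div_sub_one {x : ℝ} (hx : 0 < x) :
    √(4 / x - 1) = √(x * (4 - x)) / x := by
  rw [show 4 / x - 1 = x * (4 - x) / x ^ 2 by field_simp,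
    sqrt_div' _ (by positivity), sqrt_sq hx.le]

lemma sqrt_one_sub_one_sub_half_sq (x : ℝ) :
    √(1 - (1 - x / 2) ^ 2) = √(x * (4 - x)) / 2 := by
  rw [show 1 - (1 - x / 2) ^ 2 = x * (4 - x) / 2 ^ 2 by ring,
    sqrt_div' _ (by positivity), sqrt_sq zero_le_two]

lemma arcsin_one_sub_half_eq_arctan {x : ℝ} (hx0 : 0 < x) (hx4 : x < 4) :
    arcsin (1 - x / 2) = arctan ((2 - x) / √(x * (4 - x))) := by
  have hs_pos : 0 < √(x * (4 - x)) := sqrt_pos.2 (by nlinarith)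
  rw [arcsin_eq_arctan ⟨by linarith, by linarith⟩, sqrt_one_sub_one_sub_half_sq]
  congr 1
  field_simp

lemma FXclosed_eq_quarterCircleCDF {x : ℝ} (hx0 : 0 < x) (hx4 : x < 4) :
    FXclosed x = quarterCircleCDF x := by
  have hs : √(x * (4 - x)) ^ 2 = x * (4 - x) := sq_sqrt (by nlinarith)
  have hs_pos : 0 < √(x * (4 - x)) := sqrt_pos.2 (by nlinarith)
  have harg : (x - 2) / (x - 4) * (√(x * (4 - x)) / x) = (2 - x) / √(x * (4 - x)) := by
    have : x - 4 ≠ 0 := by linarith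
    field_simp
    linear_combination (x - 2) * hs
  rw [FXclosed, quarterCircleCDF, sqrt_four_div_sub_one hx0, harg,
    arcsin_one_sub_half_eq_arctan hx0 hx4, mul_div_cancel₀ _ hx0.ne']

lemma quarterCircleCDF_zero : quarterCircleCDF 0 = 0 := by
  simp only [quarterCircleCDF, zero_mul, sqrt_zero, sub_zero, zero_div, arcsin_one]
  ring

lemma continuous_quarterCircleCDF : Continuous quarterCircleCDF := by
  unfold quarterCircleCDF
  fun_prop

lemma hasDerivAt_quarterCircleCDF {x : ℝ} (hx0 : 0 < x) (hx4 : x < 4) :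
    HasDerivAt quarterCircleCDF (fX x) x := by
  have hp : 0 < x * (4 - x) := by nlinarith
  have hs : √(x * (4 - x)) ^ 2 = x * (4 - x) := sq_sqrt hp.le
  have hs_pos : 0 < √(x * (4 - x)) := sqrt_pos.2 hp
  have hsqrt : HasDerivAt (fun y ↦ √(y * (4 - y))) ((4 - 2 * x) / (2 * √(x * (4 - x)))) x := by
    have hpoly : HasDerivAt (fun y ↦ y * (4 - y)) (4 - 2 * x) x :=
      ((hasDerivAt_id' x).fun_mul ((hasDerivAt_const x 4).fun_sub (hasDerivAt_id' x))).congr_deriv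
        (by ring)
    exact hpoly.sqrt hp.ne'
  have harcsin : HasDerivAt (fun y ↦ arcsin (1 - y / 2)) (-1 / √(x * (4 - x))) x := by
    have hlin : HasDerivAt (fun y : ℝ ↦ 1 - y / 2) (-(1 / 2)) x :=
      ((hasDerivAt_id x).div_const 2).const_sub 1
    refine ((hasDerivAt_arcsin (by linarith) (by linarith)).comp x hlin).congr_deriv ?_
    rw [sqrt_one_sub_one_sub_half_sq]
    field_simp
  refine ((((hasDerivAt_const x π).add hsqrt).sub (harcsin.const_mul 2)).const_mul
    (1 / (2 * π))).congr_deriv ?_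
  rw [fX, if_pos ⟨hx0, hx4.le⟩, sqrt_one_div_sub_quarter hx0]
  field_simp
  linear_combination (-2) * hs

theorem quarter_circle_cdf_closed_form :
    (∀ x ∈ Set.Ioo (0 : ℝ) 4, HasDerivAt FXclosed (fX x) x) ∧
    Filter.Tendsto FXclosed (nhdsWithin 0 (Set.Ioi 0)) (nhds 0) := by
  constructor
  · rintro x ⟨hx0, hx4⟩
    have heq : FXclosed =ᶠ[nhds x] quarterCircleCDF :=
      eventually_of_mem (isOpen_Ioo.mem_nhds ⟨hx0, hx4⟩)
        fun y hy ↦ FXclosed_eq_quarterCircleCDF hy.1 hy.2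
    exact heq.hasDerivAt_iff.2 (hasDerivAt_quarterCircleCDF hx0 hx4)
  · have heq : quarterCircleCDF =ᶠ[nhdsWithin 0 (Ioi 0)] FXclosed :=
      eventually_of_mem (Ioo_mem_nhdsGT (by norm_num : (0 : ℝ) < 4))
        fun y hy ↦ (FXclosed_eq_quarterCircleCDF hy.1 hy.2).symm
    exact (tendsto_nhdsWithin_of_tendsto_nhds
      (continuous_quarterCircleCDF.tendsto' 0 0 quarterCircleCDF_zero)).congr' heq
end

section
/- For any nonnegative random variables X and Y with Y > 0 almost surely, E[ln(1 + X/Y)] = ∫₀^∞ (1/z)·( E[e^{−zY}] − E[e^{−z(X+Y)}] ) dz. In particular, if X and Y are independent, E[ln(1 + X/Y)] = ∫₀^∞ (1/z)·(1 − E[e^{−zX}])·E[e^{−zY}] dz. -/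
/-!
Frullani's integral gives `log (b / a) = ∫₀^∞ (e^{-z a} - e^{-z b}) / z dz` for `0 < a ≤ b`;
with `a = Y`, `b = X + Y` the integrand is nonnegative, so its integrability in `(ω, z)` follows
from that of `log (1 + X / Y)` and Fubini exchanges the expectation with the `z`-integral.
Under independence the moment generating function of `X + Y` factors.
-/

open Real MeasureTheory ProbabilityTheory Set

lemma exp_neg_mul_sub_exp_neg_mul_nonneg {a b z : ℝ} (hab : a ≤ b) (hz : 0 ≤ z) :
    0 ≤ exp (-z * a) - exp (-z * b) :=
  sub_nonneg.2 (exp_le_exp.2 (by nlinarith))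

lemma exp_neg_mul_sub_exp_neg_mul_le (a b z : ℝ) :
    exp (-z * a) - exp (-z * b) ≤ z * (b - a) * exp (-a * z) := by
  have hsplit : exp (-z * b) = exp (-z * a) * exp (-(z * (b - a))) := by
    rw [← exp_add]; ring_nf
  rw [hsplit, show -a * z = -z * a by ring]
  nlinarith [add_one_le_exp (-(z * (b - a))), exp_pos (-z * a)]

lemma integrableOn_Ioi_one_div_mul_exp_neg_mul_sub {a b : ℝ} (ha : 0 < a) (hab : a ≤ b) :
    IntegrableOn (fun z ↦ 1 / z * (exp (-z * a) - exp (-z * b))) (Ioi 0) := by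
  refine ((exp_neg_integrableOn_Ioi 0 ha).const_mul (b - a)).mono' (by fun_prop) ?_
  filter_upwards [ae_restrict_mem measurableSet_Ioi] with z (hz : 0 < z)
  have hdiff := exp_neg_mul_sub_exp_neg_mul_nonneg hab hz.le
  rw [norm_of_nonneg (by positivity), div_mul_eq_mul_div, one_mul, div_le_iff₀ hz]
  linarith [exp_neg_mul_sub_exp_neg_mul_le a b z]

lemma integral_Ioi_one_div_mul_exp_neg_mul_sub {a b : ℝ} (ha : 0 < a) (hab : a ≤ b) :
    ∫ z in Ioi 0, 1 / z * (exp (-z * a) - exp (-z * b)) = log (b / a) := by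
  have hb : 0 < b := ha.trans_le hab
  have hform : (fun z : ℝ ↦ 1 / z * (exp (-z * a) - exp (-z * b))) =
      fun z ↦ z⁻¹ • (exp (-(a * z)) - exp (-(b * z))) := by
    ext z; simp only [one_div, smul_eq_mul, neg_mul, mul_comm z]
  have h := Frullani.integral_Ioi_eq (f := fun x ↦ exp (-x)) (L := 1) (R := 0)
    ((by fun_prop : Continuous fun x : ℝ ↦ exp (-x)).locallyIntegrable.locallyIntegrableOn _)
    ha hb ?_ tendsto_exp_neg_atTop_nhds_zero
    (hform ▸ integrableOn_Ioi_one_div_mul_exp_neg_mul_sub ha hab)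
  · rw [hform, h, sub_zero, smul_eq_mul, mul_one]
  · simpa using
      ((by fun_prop : Continuous fun x : ℝ ↦ exp (-x)).tendsto 0).mono_left nhdsWithin_le_nhds

lemma integrable_prod_of_nonneg {α β : Type*} [MeasurableSpace α] [MeasurableSpace β]
    {μ : Measure α} {ν : Measure β} [SFinite ν] {f : α → β → ℝ}
    (hf : AEStronglyMeasurable (Function.uncurry f) (μ.prod ν))
    (hf_nonneg : ∀ᵐ x ∂μ, 0 ≤ᵐ[ν] f x) (hf_int : ∀ᵐ x ∂μ, Integrable (f x) ν)
    (h_int : Integrable (fun x ↦ ∫ y, f x y ∂ν) μ) :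
    Integrable (Function.uncurry f) (μ.prod ν) := by
  refine (integrable_prod_iff hf).2 ⟨hf_int, h_int.congr ?_⟩
  filter_upwards [hf_nonneg] with x hx
  exact integral_congr_ae (hx.mono fun y hy ↦ (norm_of_nonneg hy).symm)

lemma integrable_exp_neg_mul_of_nonneg {Ω : Type*} [MeasurableSpace Ω] {μ : Measure Ω}
    [IsFiniteMeasure μ] {Y : Ω → ℝ} (hY : AEMeasurable Y μ) (hY_nonneg : ∀ᵐ ω ∂μ, 0 ≤ Y ω)
    {z : ℝ} (hz : 0 ≤ z) :
    Integrable (fun ω ↦ exp (-z * Y ω)) μ := by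
  refine .of_mem_Icc 0 1 (by fun_prop) ?_
  filter_upwards [hY_nonneg] with ω hω
  exact ⟨(exp_pos _).le, exp_le_one_iff.2 (by nlinarith)⟩

lemma integral_log_one_add_div_eq_integral_Ioi {Ω : Type*} [MeasurableSpace Ω] {μ : Measure Ω}
    [IsFiniteMeasure μ] {X Y : Ω → ℝ} (hX : Measurable X) (hY : Measurable Y)
    (hX_nonneg : ∀ ω, 0 ≤ X ω) (hY_pos : ∀ᵐ ω ∂μ, 0 < Y ω)
    (hint : Integrable (fun ω ↦ log (1 + X ω / Y ω)) μ) :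
    ∫ ω, log (1 + X ω / Y ω) ∂μ =
      ∫ z in Ioi 0, 1 / z * ((∫ ω, exp (-z * Y ω) ∂μ) - ∫ ω, exp (-z * (X ω + Y ω)) ∂μ) := by
  set g : Ω → ℝ → ℝ := fun ω z ↦ 1 / z * (exp (-z * Y ω) - exp (-z * (X ω + Y ω)))
  have hg_log : ∀ᵐ ω ∂μ, ∫ z in Ioi 0, g ω z = log (1 + X ω / Y ω) := by
    filter_upwards [hY_pos] with ω hω
    rw [integral_Ioi_one_div_mul_exp_neg_mul_sub hω (by linarith [hX_nonneg ω]),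
      one_add_div hω.ne', add_comm]
  have hg : Integrable (Function.uncurry g) (μ.prod (volume.restrict (Ioi 0))) := by
    refine integrable_prod_of_nonneg (by fun_prop) ?_ ?_
      (hint.congr (hg_log.mono fun _ h ↦ h.symm))
    · filter_upwards [hY_pos] with ω hω
      filter_upwards [ae_restrict_mem measurableSet_Ioi] with z (hz : 0 < z)
      exact mul_nonneg (by positivity)
        (exp_neg_mul_sub_exp_neg_mul_nonneg (by linarith [hX_nonneg ω]) hz.le)
    · filter_upwards [hY_pos] with ω hω
      exact integrableOn_Ioi_one_div_mul_exp_neg_mul_sub hω (by linarith [hX_nonneg ω])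
  calc ∫ ω, log (1 + X ω / Y ω) ∂μ = ∫ ω, (∫ z in Ioi 0, g ω z) ∂μ :=
        integral_congr_ae (hg_log.mono fun _ h ↦ h.symm)
    _ = ∫ z in Ioi 0, ∫ ω, g ω z ∂μ := integral_integral_swap hg
    _ = _ := by
      refine setIntegral_congr_fun measurableSet_Ioi fun z (hz : 0 < z) ↦ ?_
      have hXY_nonneg : ∀ᵐ ω ∂μ, 0 ≤ X ω + Y ω :=
        hY_pos.mono fun ω hω ↦ add_nonneg (hX_nonneg ω) hω.le
      rw [integral_const_mul, integral_sub
        (integrable_exp_neg_mul_of_nonneg hY.aemeasurable (hY_pos.mono fun _ h ↦ h.le) hz.le)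
        (integrable_exp_neg_mul_of_nonneg (by fun_prop) hXY_nonneg hz.le)]

lemma integral_exp_neg_mul_add_of_indepFun {Ω : Type*} [MeasurableSpace Ω] {μ : Measure Ω}
    {X Y : Ω → ℝ} (hXY : IndepFun X Y μ) (hX : Measurable X) (hY : Measurable Y) (z : ℝ) :
    ∫ ω, exp (-z * (X ω + Y ω)) ∂μ = (∫ ω, exp (-z * X ω) ∂μ) * ∫ ω, exp (-z * Y ω) ∂μ :=
  hXY.mgf_add' hX.aestronglyMeasurable hY.aestronglyMeasurable

theorem log_one_add_ratio_laplace_repr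
    {Ω : Type*} [MeasureSpace Ω] (μ : Measure Ω) [IsProbabilityMeasure μ]
    (X Y : Ω → ℝ) (hX : Measurable X) (hY : Measurable Y)
    (hXpos : ∀ ω, 0 ≤ X ω) (hYpos : ∀ᵐ ω ∂μ, 0 < Y ω)
    (hint : Integrable (fun ω => Real.log (1 + X ω / Y ω)) μ) :
    (∫ ω, Real.log (1 + X ω / Y ω) ∂μ) =
      ∫ z in Set.Ioi (0 : ℝ), (1 / z) *
        ((∫ ω, Real.exp (-z * Y ω) ∂μ) - ∫ ω, Real.exp (-z * (X ω + Y ω)) ∂μ) ∧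
    (IndepFun X Y μ →
      (∫ ω, Real.log (1 + X ω / Y ω) ∂μ) =
        ∫ z in Set.Ioi (0 : ℝ), (1 / z) *
          (1 - ∫ ω, Real.exp (-z * X ω) ∂μ) * ∫ ω, Real.exp (-z * Y ω) ∂μ) := by
  have hrepr := integral_log_one_add_div_eq_integral_Ioi hX hY hXpos hYpos hint
  refine ⟨hrepr, fun hXY ↦ hrepr.trans ?_⟩
  congr 1 with z
  rw [integral_exp_neg_mul_add_of_indepFun hXY hX hY]
  ring
end

section
/- Let X, Y be independent nonnegative random variables with Y > 0 a.s. Then E[ln(1 + X/Y)] ≤ ∫₀^∞ (1/z)·(1 − e^{−z E[X]})·E[e^{−zY}] dz. -/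
/-!
Frullani's integral `∫₀^∞ (e^{-za} - e^{-zb}) dz / z = log (b / a)` with `a = Y`, `b = X + Y`,
Tonelli and independence give `E[log (1 + X / Y)] = ∫₀^∞ (1 - E[e^{-zX}]) E[e^{-zY}] dz / z`, and
Jensen's inequality `E[e^{-zX}] ≥ e^{-z E[X]}` bounds this integrand by the one on the right.
Comparing the two integrands near `0` and near `∞` shows that the right-hand side is finite whenever
the left-hand side is, so the inequality of lower integrals passes to Bochner integrals.
-/

open Real MeasureTheory ProbabilityTheory Set
open scoped ENNReal

lemma lintegral_exp_neg_mul_Ioi {t : ℝ} (ht : 0 < t) :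
    ∫⁻ z in Ioi (0 : ℝ), ENNReal.ofReal (exp (-z * t)) = ENNReal.ofReal t⁻¹ := by
  have hswap : ∀ z : ℝ, -z * t = -t * z := fun z => by ring
  simp_rw [hswap]
  rw [← ofReal_integral_eq_lintegral_ofReal (integrableOn_exp_mul_Ioi (by linarith) 0)
    (ae_of_all _ fun _ => (exp_pos _).le), integral_exp_mul_Ioi (by linarith), mul_zero,
    exp_zero, neg_div_neg_eq, one_div]

lemma integral_exp_neg_mul_Ioc {z a b : ℝ} (hz : z ≠ 0) (hab : a ≤ b) :
    ∫ t in Ioc a b, exp (-z * t) = (exp (-z * a) - exp (-z * b)) / z := by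
  rw [← intervalIntegral.integral_of_le hab,
    intervalIntegral.integral_comp_mul_left (fun t => exp t) (neg_ne_zero.2 hz), integral_exp,
    smul_eq_mul, inv_neg]
  field_simp
  ring

lemma lintegral_frullani_exp {a b : ℝ} (ha : 0 < a) (hab : a ≤ b) :
    ∫⁻ z in Ioi (0 : ℝ), ENNReal.ofReal ((exp (-z * a) - exp (-z * b)) / z) =
      ENNReal.ofReal (log (b / a)) := by
  have hpos : ∀ t ∈ Ioc a b, 0 < t := fun t ht => ha.trans ht.1
  calc _ = ∫⁻ z in Ioi 0, ∫⁻ t in Ioc a b, ENNReal.ofReal (exp (-z * t)) := by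
        refine setLIntegral_congr_fun measurableSet_Ioi fun z hz => ?_
        rw [← integral_exp_neg_mul_Ioc (ne_of_gt hz) hab, ofReal_integral_eq_lintegral_ofReal
          (by fun_prop : Continuous fun t => exp (-z * t)).integrableOn_Ioc
          (ae_of_all _ fun _ => (exp_pos _).le)]
    _ = ∫⁻ t in Ioc a b, ∫⁻ z in Ioi 0, ENNReal.ofReal (exp (-z * t)) :=
        lintegral_lintegral_swap (by fun_prop)
    _ = ∫⁻ t in Ioc a b, ENNReal.ofReal t⁻¹ :=
        setLIntegral_congr_fun measurableSet_Ioc fun t ht => lintegral_exp_neg_mul_Ioi (hpos t ht)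
    _ = ENNReal.ofReal (∫ t in Ioc a b, t⁻¹) := by
        refine (ofReal_integral_eq_lintegral_ofReal ?_ ?_).symm
        · exact (continuousOn_inv₀.mono fun t ht => (ha.trans_le ht.1).ne').integrableOn_Icc
            |>.mono_set Ioc_subset_Icc_self
        · exact ae_restrict_of_forall_mem measurableSet_Ioc fun t ht => (inv_pos.2 (hpos t ht)).le
    _ = ENNReal.ofReal (log (b / a)) := by
        rw [← intervalIntegral.integral_of_le hab, integral_inv]
        exact fun h => ha.not_ge (uIcc_of_le hab ▸ h).1

lemma integral_le_integral_of_lintegral_ofReal_le {α β : Type*} [MeasurableSpace α]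
    [MeasurableSpace β] {μ : Measure α} {ν : Measure β} {f : α → ℝ} {g : β → ℝ}
    (hf : 0 ≤ᵐ[μ] f) (hg : 0 ≤ᵐ[ν] g)
    (hfg : ∫⁻ a, ENNReal.ofReal (f a) ∂μ ≤ ∫⁻ b, ENNReal.ofReal (g b) ∂ν)
    (hint : Integrable f μ → Integrable g ν) :
    ∫ a, f a ∂μ ≤ ∫ b, g b ∂ν := by
  by_cases hfi : Integrable f μ
  · have hgi := hint hfi
    rw [← ENNReal.ofReal_le_ofReal_iff (integral_nonneg_of_ae hg),
      ofReal_integral_eq_lintegral_ofReal hfi hf, ofReal_integral_eq_lintegral_ofReal hgi hg]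
    exact hfg
  · rw [integral_undef hfi]
    exact integral_nonneg_of_ae hg

namespace ProbabilityTheory

variable {Ω : Type*} [MeasurableSpace Ω] {μ : Measure Ω} {X Y : Ω → ℝ} {s t : ℝ}

lemma measurable_mgf [SFinite μ] (hX : Measurable X) : Measurable (mgf X μ) :=
  (by fun_prop : Measurable fun p : ℝ × Ω => exp (p.1 * X p.2)).stronglyMeasurable
    |>.integral_prod_right'.measurable

lemma integrable_exp_mul_of_nonpos [IsFiniteMeasure μ] (hX : AEMeasurable X μ)
    (hXnn : 0 ≤ᵐ[μ] X) (ht : t ≤ 0) : Integrable (fun ω => exp (t * X ω)) μ :=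
  .of_mem_Icc 0 1 (measurable_exp.comp_aemeasurable (hX.const_mul t)) <|
    hXnn.mono fun _ hω =>
      ⟨(exp_pos _).le, exp_le_one_iff.2 (mul_nonpos_of_nonpos_of_nonneg ht hω)⟩

lemma mgf_le_one_of_nonpos [IsProbabilityMeasure μ] (hXnn : 0 ≤ᵐ[μ] X) (ht : t ≤ 0) :
    mgf X μ t ≤ 1 := by
  simpa using mgf_anti_of_nonpos (X := 0) hXnn ht (by simp)

lemma mgf_le_mgf_of_nonneg_of_le (hXnn : 0 ≤ᵐ[μ] X) (hst : s ≤ t)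
    (ht : Integrable (fun ω => exp (t * X ω)) μ) : mgf X μ s ≤ mgf X μ t := by
  by_cases hs : Integrable (fun ω => exp (s * X ω)) μ
  · refine integral_mono_ae hs ht ?_
    filter_upwards [hXnn] with ω hω using exp_le_exp.2 (mul_le_mul_of_nonneg_right hst hω)
  · rw [mgf_undef hs]
    exact mgf_nonneg

lemma mgf_lt_one_of_neg [IsProbabilityMeasure μ] (hX : AEMeasurable X μ) (hXnn : 0 ≤ᵐ[μ] X)
    (hX0 : ¬X =ᵐ[μ] 0) (ht : t < 0) : mgf X μ t < 1 := by
  have hexp := integrable_exp_mul_of_nonpos hX hXnn ht.le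
  have hnn : 0 ≤ᵐ[μ] fun ω => 1 - exp (t * X ω) :=
    hXnn.mono fun _ hω =>
      sub_nonneg.2 (exp_le_one_iff.2 (mul_nonpos_of_nonpos_of_nonneg ht.le hω))
  by_contra! h
  have hzero : ∫ ω, (1 - exp (t * X ω)) ∂μ = 0 := by
    refine le_antisymm ?_ (integral_nonneg_of_ae hnn)
    rw [integral_sub (integrable_const 1) hexp, integral_const, probReal_univ, one_smul]
    exact sub_nonpos.2 h
  refine hX0 ?_
  filter_upwards [(integral_eq_zero_iff_of_nonneg_ae hnn ((integrable_const 1).sub hexp)).1 hzero]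
    with ω hω
  have hexp1 : exp (t * X ω) = 1 := by simp only [Pi.zero_apply] at hω; linarith
  simpa [ht.ne] using exp_eq_one_iff _ |>.1 hexp1

lemma exp_mul_integral_le_mgf [IsProbabilityMeasure μ] (hX : Integrable X μ)
    (ht : Integrable (fun ω => exp (t * X ω)) μ) : exp (t * ∫ ω, X ω ∂μ) ≤ mgf X μ t := by
  rw [← integral_const_mul]
  exact convexOn_exp.map_integral_le continuous_exp.continuousOn isClosed_univ
    (ae_of_all _ fun _ => mem_univ _) (hX.const_mul t) ht

theorem lintegral_ofReal_log_one_add_div [IsProbabilityMeasure μ] (hX : Measurable X)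
    (hY : Measurable Y) (hXY : IndepFun X Y μ) (hXnn : 0 ≤ᵐ[μ] X) (hYpos : ∀ᵐ ω ∂μ, 0 < Y ω) :
    (∫⁻ ω, ENNReal.ofReal (log (1 + X ω / Y ω)) ∂μ) =
      ∫⁻ z in Ioi (0 : ℝ), ENNReal.ofReal (1 / z * (1 - mgf X μ (-z)) * mgf Y μ (-z)) := by
  have hYnn : 0 ≤ᵐ[μ] Y := hYpos.mono fun _ h => h.le
  calc _ = ∫⁻ ω, (∫⁻ z in Ioi (0 : ℝ),
          ENNReal.ofReal ((exp (-z * Y ω) - exp (-z * (X ω + Y ω))) / z)) ∂μ := by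
        refine lintegral_congr_ae ?_
        filter_upwards [hXnn, hYpos] with ω hx hy
        rw [lintegral_frullani_exp hy (le_add_of_nonneg_left hx), add_div, div_self hy.ne',
          add_comm (1 : ℝ)]
    _ = ∫⁻ z in Ioi (0 : ℝ), ∫⁻ ω,
          ENNReal.ofReal ((exp (-z * Y ω) - exp (-z * (X ω + Y ω))) / z) ∂μ :=
        lintegral_lintegral_swap (by fun_prop)
    _ = _ := by
        refine setLIntegral_congr_fun measurableSet_Ioi fun z hz => ?_
        have hz : 0 < z := hz
        have hz' : -z ≤ 0 := neg_nonpos.2 hz.le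
        have hXYnn : 0 ≤ᵐ[μ] X + Y := by
          filter_upwards [hXnn, hYnn] with ω hx hy using add_nonneg hx hy
        have hYint : Integrable (fun ω => exp (-z * Y ω)) μ :=
          integrable_exp_mul_of_nonpos hY.aemeasurable hYnn hz'
        have hXYint : Integrable (fun ω => exp (-z * (X ω + Y ω))) μ :=
          integrable_exp_mul_of_nonpos (hX.add hY).aemeasurable hXYnn hz'
        rw [← ofReal_integral_eq_lintegral_ofReal]
        · rw [integral_div, integral_sub hYint hXYint]
          change ENNReal.ofReal ((mgf Y μ (-z) - mgf (X + Y) μ (-z)) / z) = _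
          rw [hXY.mgf_add' hX.aestronglyMeasurable hY.aestronglyMeasurable]
          congr 1
          ring
        · exact (hYint.sub hXYint).div_const z
        · filter_upwards [hXnn] with ω hx
          exact div_nonneg (sub_nonneg.2 (exp_le_exp.2
            (mul_le_mul_of_nonpos_left (le_add_of_nonneg_left hx) hz'))) hz.le

/-- On `(0, 1]` the integrand is at most `E[X]`; on `(1, ∞)` it is at most the integrand of `hF`
divided by `1 - E[e^{-X}]`, which is positive unless `X = 0` a.e. -/
lemma lintegral_one_sub_exp_mul_integral_ne_top [IsProbabilityMeasure μ] (hX : AEMeasurable X μ)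
    (hXnn : 0 ≤ᵐ[μ] X) {L : ℝ → ℝ} (hL : ∀ z, 0 < z → 0 ≤ L z ∧ L z ≤ 1)
    (hF : ∫⁻ z in Ioi (0 : ℝ), ENNReal.ofReal (1 / z * (1 - mgf X μ (-z)) * L z) ≠ ∞) :
    ∫⁻ z in Ioi (0 : ℝ), ENNReal.ofReal (1 / z * (1 - exp (-z * ∫ ω, X ω ∂μ)) * L z) ≠ ∞ := by
  set m := ∫ ω, X ω ∂μ
  rcases eq_or_ne m 0 with hm | hm
  · simp [hm]
  have hm0 : 0 ≤ m := integral_nonneg_of_ae hXnn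
  set q := 1 - mgf X μ (-1)
  have hq : 0 < q := sub_pos.2 <| mgf_lt_one_of_neg hX hXnn
    (fun h => hm (integral_eq_zero_of_ae h)) (by norm_num)
  have hnear : ∀ z ∈ Ioc (0 : ℝ) 1, 1 / z * (1 - exp (-z * m)) * L z ≤ m := by
    rintro z ⟨hz, -⟩
    obtain ⟨hL0, hL1⟩ := hL z hz
    have hexp : 1 - exp (-z * m) ≤ z * m := by linarith [add_one_le_exp (-z * m)]
    have hexp0 : 0 ≤ 1 - exp (-z * m) :=
      sub_nonneg.2 (exp_le_one_iff.2 (by nlinarith))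
    calc 1 / z * (1 - exp (-z * m)) * L z ≤ 1 / z * (z * m) * 1 := by gcongr
      _ = m := by field_simp
  have hfar : ∀ z ∈ Ioi (1 : ℝ),
      1 / z * (1 - exp (-z * m)) * L z ≤ q⁻¹ * (1 / z * (1 - mgf X μ (-z)) * L z) := by
    intro z hz
    have hz : 1 < z := hz
    obtain ⟨hL0, -⟩ := hL z (by linarith)
    have hmgf : q ≤ 1 - mgf X μ (-z) := sub_le_sub_left (mgf_le_mgf_of_nonneg_of_le hXnn
      (by linarith) (integrable_exp_mul_of_nonpos hX hXnn (by norm_num))) 1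
    calc 1 / z * (1 - exp (-z * m)) * L z ≤ 1 / z * 1 * L z := by
          gcongr
          linarith [exp_pos (-z * m)]
      _ = q⁻¹ * (1 / z * q * L z) := by field_simp
      _ ≤ q⁻¹ * (1 / z * (1 - mgf X μ (-z)) * L z) := by gcongr
  rw [← Ioc_union_Ioi_eq_Ioi zero_le_one,
    lintegral_union measurableSet_Ioi (Ioc_disjoint_Ioi le_rfl)]
  refine ENNReal.add_ne_top.2 ⟨ne_top_of_le_ne_top ?_ (setLIntegral_mono' measurableSet_Ioc
    fun z hz => ENNReal.ofReal_le_ofReal (hnear z hz)), ne_top_of_le_ne_top ?_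
    (setLIntegral_mono' measurableSet_Ioi fun z hz => ENNReal.ofReal_le_ofReal (hfar z hz))⟩
  · simp
  · simp_rw [ENNReal.ofReal_mul (inv_nonneg.2 hq.le)]
    rw [lintegral_const_mul' _ _ ENNReal.ofReal_ne_top]
    exact ENNReal.mul_ne_top ENNReal.ofReal_ne_top
      (ne_top_of_le_ne_top hF (lintegral_mono_set (Ioi_subset_Ioi zero_le_one)))

end ProbabilityTheory

theorem ergodic_se_upper_bound_general
    {Ω : Type*} [MeasureSpace Ω] (μ : Measure Ω) [IsProbabilityMeasure μ]
    (X Y : Ω → ℝ) (hX : Measurable X) (hY : Measurable Y)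
    (hindep : IndepFun X Y μ)
    (hXpos : ∀ ω, 0 ≤ X ω) (hYpos : ∀ᵐ ω ∂μ, 0 < Y ω)
    (hXint : Integrable X μ) :
    (∫ ω, Real.log (1 + X ω / Y ω) ∂μ) ≤
      ∫ z in Set.Ioi (0 : ℝ),
        (1 / z) * (1 - Real.exp (-z * ∫ ω, X ω ∂μ)) * ∫ ω, Real.exp (-z * Y ω) ∂μ := by
  show _ ≤ ∫ z in Ioi (0 : ℝ), 1 / z * (1 - exp (-z * ∫ ω, X ω ∂μ)) * mgf Y μ (-z)
  have hXnn : 0 ≤ᵐ[μ] X := ae_of_all _ hXpos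
  have hmgfY (z : ℝ) (hz : 0 < z) : 0 ≤ mgf Y μ (-z) ∧ mgf Y μ (-z) ≤ 1 :=
    ⟨mgf_nonneg, mgf_le_one_of_nonpos (hYpos.mono fun _ h => h.le) (neg_nonpos.2 hz.le)⟩
  have hjensen (z : ℝ) (hz : 0 < z) : exp (-z * ∫ ω, X ω ∂μ) ≤ mgf X μ (-z) :=
    exp_mul_integral_le_mgf hXint
      (integrable_exp_mul_of_nonpos hX.aemeasurable hXnn (neg_nonpos.2 hz.le))
  have hbound_nn : ∀ᵐ z ∂volume.restrict (Ioi (0 : ℝ)),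
      0 ≤ 1 / z * (1 - exp (-z * ∫ ω, X ω ∂μ)) * mgf Y μ (-z) := by
    refine ae_restrict_of_forall_mem measurableSet_Ioi fun z (hz : 0 < z) => ?_
    have hexp : exp (-z * ∫ ω, X ω ∂μ) ≤ 1 :=
      exp_le_one_iff.2 (mul_nonpos_of_nonpos_of_nonneg (by linarith) (integral_nonneg hXpos))
    exact mul_nonneg (mul_nonneg (by positivity) (sub_nonneg.2 hexp)) (hmgfY z hz).1
  have hlaplace := lintegral_ofReal_log_one_add_div hX hY hindep hXnn hYpos
  refine integral_le_integral_of_lintegral_ofReal_le ?_ hbound_nn ?_ fun hint => ?_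
  · filter_upwards [hYpos] with ω hy
    exact log_nonneg (le_add_of_nonneg_right (div_nonneg (hXpos ω) hy.le))
  · rw [hlaplace]
    refine setLIntegral_mono' measurableSet_Ioi fun z (hz : 0 < z) => ENNReal.ofReal_le_ofReal ?_
    gcongr
    exacts [(hmgfY z hz).1, hjensen z hz]
  · have hmgfY_meas := measurable_mgf (μ := μ) hY
    refine (lintegral_ofReal_ne_top_iff_integrable (by fun_prop) hbound_nn).1 ?_
    refine lintegral_one_sub_exp_mul_integral_ne_top hX.aemeasurable hXnn hmgfY ?_
    exact hlaplace ▸ hint.lintegral_lt_top.ne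

theorem ergodic_se_upper_bound
    {Ω : Type*} [MeasureSpace Ω] (μ : Measure Ω) [IsProbabilityMeasure μ]
    (X Y : Ω → ℝ) (hX : Measurable X) (hY : Measurable Y)
    (hindep : IndepFun X Y μ)
    (hXpos : ∀ ω, 0 ≤ X ω) (hYpos : ∀ᵐ ω ∂μ, 0 < Y ω)
    (hXint : Integrable X μ)
    (hint : Integrable (fun ω => Real.log (1 + X ω / Y ω)) μ) :
    (∫ ω, Real.log (1 + X ω / Y ω) ∂μ) ≤
      ∫ z in Set.Ioi (0 : ℝ),
        (1 / z) * (1 - Real.exp (-z * ∫ ω, X ω ∂μ)) * ∫ ω, Real.exp (-z * Y ω) ∂μ :=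
  ergodic_se_upper_bound_general μ X Y hX hY hindep hXpos hYpos hXint
end

section
/- For m a positive integer, α > 2, and z ≥ 0, it holds that ∫₀^∞ (1 − (1 + z r^{−α})^{−m}) · 2πλ r dr = πλ z^{2/α}·Γ(1 − 2/α)·Γ(m + 2/α)/Γ(m) (for λ > 0), i.e., the integral converges and has this closed form. -/
/-!
With `δ = 2/α`, the substitution `t = z r^(-α)` turns the integral into
`(2πλ/α) z^δ ∫₀^∞ (1 - (1+t)^(-m)) t^(-1-δ) dt`. Since
`1 - (1+t)^(-(n+1)) = 1 - (1+t)^(-n) + t (1+t)^(-(n+1))`, the last integral is the sum over `k < m`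
of the Beta integrals of the second kind `∫₀^∞ t^(-δ) (1+t)^(-(k+1)) dt = B(1 - δ, k + δ)`
(reduced to the Beta integral over `(0, 1)` by `x ↦ x / (1 - x)`), and this sum of Gamma quotients
telescopes to `Γ(1 - δ) Γ(m + δ) / (δ Γ(m))`.
-/

open Real MeasureTheory Set

lemma Complex.ofReal_rpow_mul_one_sub_rpow {a b x : ℝ} (hx : x ∈ Icc (0 : ℝ) 1) :
    ((x ^ (a - 1) * (1 - x) ^ (b - 1) : ℝ) : ℂ) =
      (x : ℂ) ^ ((a : ℂ) - 1) * (1 - (x : ℂ)) ^ ((b : ℂ) - 1) := by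
  push_cast [Complex.ofReal_mul, Complex.ofReal_cpow hx.1, Complex.ofReal_cpow (sub_nonneg.2 hx.2)]
  rfl

lemma Complex.betaIntegral_ofReal (a b : ℝ) :
    Complex.betaIntegral a b = ∫ x in Ioo (0 : ℝ) 1, x ^ (a - 1) * (1 - x) ^ (b - 1) := by
  rw [Complex.betaIntegral, intervalIntegral.integral_of_le zero_le_one,
    integral_Ioc_eq_integral_Ioo]
  refine Eq.trans ?_ _root_.integral_ofReal
  exact setIntegral_congr_fun measurableSet_Ioo fun x hx =>
    (Complex.ofReal_rpow_mul_one_sub_rpow (Ioo_subset_Icc_self hx)).symm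

lemma integrableOn_Ioo_rpow_mul_one_sub_rpow {a b : ℝ} (ha : 0 < a) (hb : 0 < b) :
    IntegrableOn (fun x : ℝ => x ^ (a - 1) * (1 - x) ^ (b - 1)) (Ioo 0 1) := by
  have hβ := (Complex.betaIntegral_convergent (u := a) (v := b) (by simpa) (by simpa)).1
  refine IntegrableOn.congr_fun (hβ.mono_set Ioo_subset_Ioc_self).re (fun x hx => ?_)
    measurableSet_Ioo
  rw [← Complex.ofReal_rpow_mul_one_sub_rpow (Ioo_subset_Icc_self hx)]
  rfl

lemma integral_Ioo_rpow_mul_one_sub_rpow {a b : ℝ} (ha : 0 < a) (hb : 0 < b) :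
    ∫ x in Ioo (0 : ℝ) 1, x ^ (a - 1) * (1 - x) ^ (b - 1) = ProbabilityTheory.beta a b := by
  rw [ProbabilityTheory.beta_eq_betaIntegralReal a b ha hb, Complex.betaIntegral_ofReal,
    Complex.ofReal_re]

lemma hasDerivAt_div_one_sub {x : ℝ} (hx : x ≠ 1) :
    HasDerivAt (fun y : ℝ => y / (1 - y)) ((1 - x) ^ 2)⁻¹ x := by
  have h := (hasDerivAt_id' x).fun_div ((hasDerivAt_id' x).const_sub 1) (sub_ne_zero.2 hx.symm)
  exact h.congr_deriv (by ring)

lemma injOn_div_one_sub : InjOn (fun x : ℝ => x / (1 - x)) (Iio 1) := by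
  intro x hx y hy hxy
  have hx' : 1 - x ≠ 0 := by linarith [show x < 1 from hx]
  have hy' : 1 - y ≠ 0 := by linarith [show y < 1 from hy]
  simp only [div_eq_div_iff hx' hy'] at hxy
  linarith

lemma image_div_one_sub_Ioo : (fun x : ℝ => x / (1 - x)) '' Ioo 0 1 = Ioi 0 := by
  ext t
  constructor
  · rintro ⟨x, hx, rfl⟩
    exact div_pos hx.1 (sub_pos.2 hx.2)
  · intro (ht : 0 < t)
    refine ⟨t / (1 + t), ⟨by positivity, (div_lt_one (by linarith)).2 (by linarith)⟩, ?_⟩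
    field_simp
    ring

section DivOneSub

variable {E : Type*} [NormedAddCommGroup E] [NormedSpace ℝ E]

lemma integrableOn_Ioi_iff_integrableOn_Ioo_div_one_sub (g : ℝ → E) :
    IntegrableOn g (Ioi 0) ↔
      IntegrableOn (fun x => ((1 - x) ^ 2)⁻¹ • g (x / (1 - x))) (Ioo 0 1) := by
  simpa only [image_div_one_sub_Ioo, abs_inv, abs_sq] using
    integrableOn_image_iff_integrableOn_abs_deriv_smul (measurableSet_Ioo (a := 0) (b := 1))
      (fun x hx => (hasDerivAt_div_one_sub hx.2.ne).hasDerivWithinAt)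
      (injOn_div_one_sub.mono Ioo_subset_Iio_self) g

lemma integral_Ioi_eq_integral_Ioo_div_one_sub (g : ℝ → E) :
    ∫ t in Ioi 0, g t = ∫ x in Ioo 0 1, ((1 - x) ^ 2)⁻¹ • g (x / (1 - x)) := by
  simpa only [image_div_one_sub_Ioo, abs_inv, abs_sq] using
    integral_image_eq_integral_abs_deriv_smul (measurableSet_Ioo (a := 0) (b := 1))
      (fun x hx => (hasDerivAt_div_one_sub hx.2.ne).hasDerivWithinAt)
      (injOn_div_one_sub.mono Ioo_subset_Iio_self) g

end DivOneSub

lemma inv_one_sub_sq_mul_rpow_mul_one_add_rpow {a b x : ℝ} (hx : x ∈ Ioo (0 : ℝ) 1) :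
    ((1 - x) ^ 2)⁻¹ * ((x / (1 - x)) ^ (a - 1) * (1 + x / (1 - x)) ^ (-(a + b))) =
      x ^ (a - 1) * (1 - x) ^ (b - 1) := by
  have hx' : 0 < 1 - x := sub_pos.2 hx.2
  have h_one_add : 1 + x / (1 - x) = (1 - x)⁻¹ := by field_simp; ring
  have h_split : (1 - x) ^ (a + b) = (1 - x) ^ (a - 1) * (1 - x) ^ (b - 1) * (1 - x) ^ 2 := by
    rw [show a + b = (a - 1) + (b - 1) + 2 by ring, rpow_add hx', rpow_add hx', rpow_two]
  rw [h_one_add, div_rpow hx.1.le hx'.le, inv_rpow hx'.le, ← rpow_neg hx'.le, neg_neg, h_split]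
  field_simp

lemma integrableOn_Ioi_rpow_mul_one_add_rpow {a b : ℝ} (ha : 0 < a) (hb : 0 < b) :
    IntegrableOn (fun t : ℝ => t ^ (a - 1) * (1 + t) ^ (-(a + b))) (Ioi 0) :=
  (integrableOn_Ioi_iff_integrableOn_Ioo_div_one_sub _).2 <|
    (integrableOn_Ioo_rpow_mul_one_sub_rpow ha hb).congr_fun
      (fun _ hx => (inv_one_sub_sq_mul_rpow_mul_one_add_rpow hx).symm) measurableSet_Ioo

lemma integral_Ioi_rpow_mul_one_add_rpow {a b : ℝ} (ha : 0 < a) (hb : 0 < b) :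
    ∫ t in Ioi (0 : ℝ), t ^ (a - 1) * (1 + t) ^ (-(a + b)) = ProbabilityTheory.beta a b := by
  rw [integral_Ioi_eq_integral_Ioo_div_one_sub, ← integral_Ioo_rpow_mul_one_sub_rpow ha hb]
  exact setIntegral_congr_fun measurableSet_Ioo fun _ hx =>
    inv_one_sub_sq_mul_rpow_mul_one_add_rpow hx

lemma one_sub_rpow_neg_add_one {x : ℝ} (hx : 0 < x) (s : ℝ) :
    1 - x ^ (-(s + 1)) = 1 - x ^ (-s) + (x - 1) * x ^ (-(s + 1)) := by
  rw [show -s = -(s + 1) + 1 by ring, rpow_add_one hx.ne']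
  ring

lemma integrableOn_and_integral_Ioi_one_sub_one_add_rpow_neg_mul_rpow {δ : ℝ} (hδ₀ : 0 < δ)
    (hδ₁ : δ < 1) (n : ℕ) :
    IntegrableOn (fun t : ℝ => (1 - (1 + t) ^ (-(n : ℝ))) * t ^ (-1 - δ)) (Ioi 0) ∧
      ∫ t in Ioi (0 : ℝ), (1 - (1 + t) ^ (-(n : ℝ))) * t ^ (-1 - δ) =
        ∑ k ∈ Finset.range n, ProbabilityTheory.beta (1 - δ) (k + δ) := by
  induction n with
  | zero => simp
  | succ n ih =>
    have hβ₀ : 0 < 1 - δ := sub_pos.2 hδ₁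
    have hβ₁ : 0 < (n : ℝ) + δ := by positivity
    have h_split : EqOn (fun t : ℝ => (1 - (1 + t) ^ (-((n + 1 : ℕ) : ℝ))) * t ^ (-1 - δ))
        (fun t => (1 - (1 + t) ^ (-(n : ℝ))) * t ^ (-1 - δ) +
          t ^ ((1 - δ) - 1) * (1 + t) ^ (-((1 - δ) + (n + δ))))
        (Ioi 0) := by
      intro t (ht : 0 < t)
      dsimp only
      rw [Nat.cast_succ, one_sub_rpow_neg_add_one (by linarith) (n : ℝ),
        show (1 - δ) - 1 = (-1 - δ) + 1 by ring, rpow_add_one ht.ne',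
        show (1 - δ) + (n + δ) = (n : ℝ) + 1 by ring]
      ring
    have h_beta := integrableOn_Ioi_rpow_mul_one_add_rpow hβ₀ hβ₁
    refine ⟨(ih.1.add h_beta).congr_fun h_split.symm measurableSet_Ioi, ?_⟩
    rw [setIntegral_congr_fun measurableSet_Ioi h_split, integral_add ih.1 h_beta, ih.2,
      integral_Ioi_rpow_mul_one_add_rpow hβ₀ hβ₁, Finset.sum_range_succ]

lemma sum_range_Gamma_add_div_Gamma_add_one {δ : ℝ} (hδ : 0 < δ) {m : ℕ} (hm : 1 ≤ m) :
    ∑ k ∈ Finset.range m, Gamma (k + δ) / Gamma (k + 1) = Gamma (m + δ) / (δ * Gamma m) := by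
  induction m, hm using Nat.le_induction with
  | base =>
    rw [Finset.sum_range_one, Nat.cast_zero, Nat.cast_one, zero_add, zero_add, add_comm 1 δ,
      Gamma_add_one hδ.ne', Gamma_one]
    field_simp
  | succ n hn ih =>
    have hn' : (0 : ℝ) < n := by exact_mod_cast hn
    rw [Finset.sum_range_succ, ih, Nat.cast_succ, Gamma_add_one hn'.ne',
      show (n : ℝ) + 1 + δ = (n + δ) + 1 by ring, Gamma_add_one (by positivity)]
    have := (Gamma_pos_of_pos hn').ne'
    field_simp

lemma integral_Ioi_one_sub_one_add_rpow_neg_mul_rpow {δ : ℝ} (hδ₀ : 0 < δ) (hδ₁ : δ < 1)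
    {m : ℕ} (hm : 1 ≤ m) :
    ∫ t in Ioi (0 : ℝ), (1 - (1 + t) ^ (-(m : ℝ))) * t ^ (-1 - δ) =
      Gamma (1 - δ) * Gamma (m + δ) / (δ * Gamma m) := by
  have h_beta (k : ℕ) : ProbabilityTheory.beta (1 - δ) (k + δ) =
      Gamma (1 - δ) * (Gamma (k + δ) / Gamma (k + 1)) := by
    rw [ProbabilityTheory.beta, show 1 - δ + (k + δ) = (k : ℝ) + 1 by ring, mul_div_assoc]
  rw [(integrableOn_and_integral_Ioi_one_sub_one_add_rpow_neg_mul_rpow hδ₀ hδ₁ m).2,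
    Finset.sum_congr rfl fun k _ => h_beta k, ← Finset.mul_sum,
    sum_range_Gamma_add_div_Gamma_add_one hδ₀ hm, mul_div_assoc]

lemma rpow_sub_one_mul_rpow_rpow_two_div_sub_one {r p : ℝ} (hr : 0 < r) (hp : p ≠ 0) :
    r ^ (p - 1) * (r ^ p) ^ (2 / p - 1) = r := by
  rw [← rpow_mul hr.le, ← rpow_add hr, show p - 1 + p * (2 / p - 1) = 1 by field_simp; ring,
    rpow_one]

lemma integrableOn_Ioi_comp_rpow_mul_self_iff (f : ℝ → ℝ) {p : ℝ} (hp : p ≠ 0) :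
    IntegrableOn (fun r => f (r ^ p) * r) (Ioi 0) ↔
      IntegrableOn (fun y => f y * y ^ (2 / p - 1)) (Ioi 0) := by
  rw [← integrableOn_Ioi_comp_rpow_iff' (fun y => f y * y ^ (2 / p - 1)) hp]
  refine integrableOn_congr_fun (fun r (hr : 0 < r) => ?_) measurableSet_Ioi
  rw [smul_eq_mul, mul_left_comm, rpow_sub_one_mul_rpow_rpow_two_div_sub_one hr hp]

lemma integral_Ioi_comp_rpow_mul_self (f : ℝ → ℝ) {p : ℝ} (hp : p ≠ 0) :
    ∫ r in Ioi 0, f (r ^ p) * r = |p|⁻¹ * ∫ y in Ioi 0, f y * y ^ (2 / p - 1) := by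
  rw [← integral_comp_rpow_Ioi (fun y => f y * y ^ (2 / p - 1)) hp, ← integral_const_mul]
  refine setIntegral_congr_fun measurableSet_Ioi fun r (hr : 0 < r) => ?_
  rw [smul_eq_mul, mul_assoc |p|, mul_left_comm (r ^ (p - 1)),
    rpow_sub_one_mul_rpow_rpow_two_div_sub_one hr hp, inv_mul_cancel_left₀ (abs_ne_zero.2 hp)]

lemma integrableOn_Ioi_comp_mul_left_mul_rpow_iff (f : ℝ → ℝ) {c : ℝ} (hc : 0 < c) (s : ℝ) :
    IntegrableOn (fun y => f (c * y) * y ^ s) (Ioi 0) ↔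
      IntegrableOn (fun t => f t * t ^ s) (Ioi 0) := by
  have h := integrableOn_Ioi_comp_mul_left_iff (fun t => f t * t ^ s) 0 hc
  rw [mul_zero] at h
  rw [← h]
  refine (integrable_const_mul_iff (isUnit_iff_ne_zero.2 (rpow_pos_of_pos hc s).ne') _).symm.trans
    (integrableOn_congr_fun (fun y (hy : 0 < y) => ?_) measurableSet_Ioi)
  rw [mul_rpow hc.le hy.le]
  ring

lemma integral_Ioi_comp_mul_left_mul_rpow (f : ℝ → ℝ) {c : ℝ} (hc : 0 < c) (s : ℝ) :
    ∫ y in Ioi 0, f (c * y) * y ^ s = c ^ (-s - 1) * ∫ t in Ioi 0, f t * t ^ s := by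
  have h := integral_comp_mul_left_Ioi (fun t => f t * t ^ s) 0 hc
  rw [mul_zero, smul_eq_mul] at h
  rw [rpow_sub_one hc.ne', div_eq_mul_inv, mul_assoc, ← h, ← integral_const_mul]
  refine setIntegral_congr_fun measurableSet_Ioi fun y (hy : 0 < y) => ?_
  rw [mul_rpow hc.le hy.le, rpow_neg hc.le]
  have := (rpow_pos_of_pos hc s).ne'
  field_simp

theorem interference_integral_closed_form_general
    (m : ℕ) (hm : 1 ≤ m) (α z lam : ℝ) (hα : 2 < α) (hz : 0 ≤ z) :
    IntegrableOn (fun r : ℝ =>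
        (1 - (1 + z * r ^ (-α)) ^ (-(m : ℝ))) * (2 * π * lam * r)) (Set.Ioi 0) ∧
    ∫ r in Set.Ioi (0 : ℝ),
        (1 - (1 + z * r ^ (-α)) ^ (-(m : ℝ))) * (2 * π * lam * r) =
      π * lam * z ^ (2 / α) * Real.Gamma (1 - 2 / α) *
        Real.Gamma ((m : ℝ) + 2 / α) / Real.Gamma (m : ℝ) := by
  have hα₀ : 0 < α := by linarith
  rcases hz.eq_or_lt with rfl | hz
  · simp [zero_rpow (div_pos two_pos hα₀).ne']
  set f : ℝ → ℝ := fun t => 1 - (1 + t) ^ (-(m : ℝ))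
  have h_integrand : (fun r : ℝ => (1 - (1 + z * r ^ (-α)) ^ (-(m : ℝ))) * (2 * π * lam * r)) =
      fun r => 2 * π * lam * (f (z * r ^ (-α)) * r) := by
    ext r; ring
  set δ := 2 / α with hδ
  have h_exp : 2 / -α - 1 = -1 - δ := by ring
  have hδ₀ : 0 < δ := by positivity
  have hδ₁ : δ < 1 := (div_lt_one hα₀).2 hα
  have hp : -α ≠ 0 := by linarith
  have h_int : IntegrableOn (fun r => f (z * r ^ (-α)) * r) (Ioi 0) := by
    rw [integrableOn_Ioi_comp_rpow_mul_self_iff (fun y => f (z * y)) hp, h_exp,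
      integrableOn_Ioi_comp_mul_left_mul_rpow_iff f hz]
    exact (integrableOn_and_integral_Ioi_one_sub_one_add_rpow_neg_mul_rpow hδ₀ hδ₁ m).1
  rw [h_integrand]
  refine ⟨h_int.const_mul _, ?_⟩
  rw [integral_const_mul, integral_Ioi_comp_rpow_mul_self (fun y => f (z * y)) hp, h_exp,
    integral_Ioi_comp_mul_left_mul_rpow f hz,
    integral_Ioi_one_sub_one_add_rpow_neg_mul_rpow hδ₀ hδ₁ hm, abs_neg, abs_of_pos hα₀,
    show -(-1 - δ) - 1 = δ by ring, hδ]
  have := (Gamma_pos_of_pos (show (0 : ℝ) < m by exact_mod_cast hm)).ne'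
  field_simp

theorem interference_integral_closed_form
    (m : ℕ) (hm : 1 ≤ m) (α z lam : ℝ) (hα : 2 < α) (hz : 0 ≤ z) (hlam : 0 < lam) :
    IntegrableOn (fun r : ℝ =>
        (1 - (1 + z * r ^ (-α)) ^ (-(m : ℝ))) * (2 * π * lam * r)) (Set.Ioi 0) ∧
    ∫ r in Set.Ioi (0 : ℝ),
        (1 - (1 + z * r ^ (-α)) ^ (-(m : ℝ))) * (2 * π * lam * r) =
      π * lam * z ^ (2 / α) * Real.Gamma (1 - 2 / α) *
        Real.Gamma ((m : ℝ) + 2 / α) / Real.Gamma (m : ℝ) :=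
  interference_integral_closed_form_general m hm α z lam hα hz
end
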